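/- Let n be a nonnegative integer and let a, b be complex numbers with (−b−2n)_n ≠ 0, (1−b−n)_n ≠ 0, (1+a)_{2n} ≠ 0, (1+a−b)_n ≠ 0, and (1+a+n)_n ≠ 0. Then the sum of the first n+1 terms of the series _3F_2(−b/2−n, (1−b)/2−n, −a−2n ; −b−2n, 1−b−n ; 4), namely Σ_{k=0}^{n} [(−b/2−n)_k ((1−b)/2−n)_k (−a−2n)_k / (k! (−b−2n)_k (1−b−n)_k)] 4^k, equals [(−1)^n (1+a)_{2n} / (n! (1+a)_n)] · _4F_3(−n, (1+a−b)/2, (2+a−b)/2, 1 ; 1+a−b, 1−b−n, 1+a+n ; 4). -/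

import Mathlib

/-!
Multiplying both sides by `(1-b-n)_n` and using the duplication formula
`(c/2)_k ((c+1)/2)_k 4^k = (c)_{2k}` together with the reflection `(y)_m = (-1)^m (1-m-y)_m`,
the identity becomes, with `x = -a-2n` and sums over `i + j = n`,
`∑ (x)_i (b+2j+1)_i (b)_j / i! = ∑ (x)_i (x+b+2i)_j (b)_i / i!`.
Expanding the middle Pochhammer symbol on each side by Chu–Vandermonde turns both sums into
the same triple sum `∑_{i+j+l=n} (j+l)!/(i! j! l!) (x)_{i+j} (b)_{i+l}`.
-/

open Finset

/-- The rising factorial (Pochhammer symbol) `(a)_k = a(a+1)⋯(a+k-1)`. -/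
noncomputable def poch (a : ℂ) (k : ℕ) : ℂ := ∏ i ∈ Finset.range k, (a + i)

open Nat

@[simp] lemma poch_zero (a : ℂ) : poch a 0 = 1 := by simp [poch]

lemma poch_succ (a : ℂ) (k : ℕ) : poch a (k + 1) = poch a k * (a + k) :=
  prod_range_succ _ _

lemma poch_add (a : ℂ) (i j : ℕ) : poch a (i + j) = poch a i * poch (a + i) j := by
  simp only [poch, prod_range_add, Nat.cast_add, add_assoc]

lemma poch_add_div {a : ℂ} {i : ℕ} (h : poch a i ≠ 0) (j : ℕ) :
    poch a (i + j) / poch a i = poch (a + i) j := by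
  rw [poch_add, mul_div_cancel_left₀ _ h]

lemma poch_ne_zero_of_le {a : ℂ} {m n : ℕ} (h : poch a n ≠ 0) (hmn : m ≤ n) :
    poch a m ≠ 0 := by
  obtain ⟨k, rfl⟩ := Nat.exists_eq_add_of_le hmn
  rw [poch_add] at h
  exact left_ne_zero_of_mul h

lemma poch_eq_neg_one_pow_mul {y w : ℂ} {m : ℕ} (h : y + w + m = 1) :
    poch y m = (-1) ^ m * poch w m := by
  rw [poch, ← prod_range_reflect, show (-1 : ℂ) ^ m = ∏ _i ∈ range m, (-1 : ℂ) by simp,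
    poch, ← prod_mul_distrib]
  refine prod_congr rfl fun k hk => ?_
  rw [Nat.cast_sub (by simp at hk; omega), Nat.cast_sub (by simp at hk; omega)]
  linear_combination h

lemma factorial_mul_poch_natCast_add_one (r s : ℕ) :
    (r ! : ℂ) * poch (r + 1) s = (r + s)! := by
  induction s with
  | zero => simp
  | succ s ih =>
    rw [poch_succ, ← mul_assoc, ih, ← add_assoc, factorial_succ]
    push_cast
    ring

lemma poch_one (k : ℕ) : poch 1 k = k ! := by
  simpa using factorial_mul_poch_natCast_add_one 0 k

lemma poch_two_mul (c : ℂ) (k : ℕ) :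
    poch c (2 * k) = poch (c / 2) k * poch ((c + 1) / 2) k * 4 ^ k := by
  induction k with
  | zero => simp
  | succ k ih =>
    rw [show 2 * (k + 1) = 2 * k + 1 + 1 by ring]
    simp only [poch_succ, ih]
    push_cast
    ring

lemma poch_add_self {c : ℂ} {k : ℕ} (h : poch c k ≠ 0) :
    poch (c + k) k = poch (c / 2) k * poch ((c + 1) / 2) k * 4 ^ k / poch c k := by
  rw [← poch_two_mul, two_mul, poch_add_div h]

lemma poch_add_eq_sum_antidiagonal (u v : ℂ) (m : ℕ) :
    poch (u + v) m = ∑ p ∈ antidiagonal m, m.choose p.1 * (poch u p.1 * poch v p.2) := by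
  induction m with
  | zero => simp
  | succ m ih =>
    rw [sum_antidiagonal_choose_succ_mul (fun i j => poch u i * poch v j), poch_succ, ih,
      sum_mul, ← sum_add_distrib]
    refine sum_congr rfl fun p hp => ?_
    rw [HasAntidiagonal.mem_antidiagonal] at hp
    rw [← Nat.choose_symm_of_eq_add hp.symm, poch_succ, poch_succ]
    have hm : (m : ℂ) = p.1 + p.2 := by exact_mod_cast hp.symm
    rw [hm]
    ring

lemma sum_antidiagonal_antidiagonal_assoc {M : Type*} [AddCommMonoid M] (f : ℕ → ℕ → ℕ → M)
    (n : ℕ) :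
    ∑ p ∈ antidiagonal n, ∑ q ∈ antidiagonal p.1, f q.1 q.2 p.2 =
      ∑ p ∈ antidiagonal n, ∑ q ∈ antidiagonal p.2, f p.1 q.1 q.2 := by
  rw [sum_sigma', sum_sigma']
  refine sum_bij' (fun x _ => ⟨(x.2.1, x.2.2 + x.1.2), (x.2.2, x.1.2)⟩)
    (fun x _ => ⟨(x.1.1 + x.2.1, x.2.2), (x.1.1, x.2.1)⟩) ?_ ?_ ?_ ?_ ?_ <;>
    simp only [mem_sigma, HasAntidiagonal.mem_antidiagonal, and_imp, Sigma.forall,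
      Prod.forall] <;>
    rintro a b c d rfl rfl <;> simp [add_assoc]

noncomputable def pochTripleSum (x z : ℂ) (n : ℕ) : ℂ :=
  ∑ p ∈ antidiagonal n, ∑ q ∈ antidiagonal p.2,
    ((q.1 + q.2).choose q.1 : ℂ) * poch x (p.1 + q.1) * poch z (p.1 + q.2) / p.1 !

lemma sum_antidiagonal_poch_add_eq_pochTripleSum (x z : ℂ) (n : ℕ) :
    ∑ p ∈ antidiagonal n, poch x p.1 * poch (x + z + 2 * p.1) p.2 * poch z p.1 / p.1 ! =
      pochTripleSum x z n := by
  refine sum_congr rfl fun p _ => ?_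
  rw [show x + z + 2 * p.1 = (x + p.1) + (z + p.1) by ring, poch_add_eq_sum_antidiagonal,
    mul_sum, sum_mul, sum_div]
  refine sum_congr rfl fun q hq => ?_
  rw [HasAntidiagonal.mem_antidiagonal.1 hq, poch_add, poch_add]
  ring

lemma sum_antidiagonal_poch_two_mul_add_one_eq_pochTripleSum (x z : ℂ) (n : ℕ) :
    ∑ p ∈ antidiagonal n, poch x p.1 * poch (z + 2 * p.2 + 1) p.1 * poch z p.2 / p.1 ! =
      pochTripleSum x z n := by
  rw [pochTripleSum, ← sum_antidiagonal_antidiagonal_assoc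
    (fun i j l => ((j + l).choose j : ℂ) * poch x (i + j) * poch z (i + l) / i !)]
  refine sum_congr rfl fun ⟨m, l⟩ _ => ?_
  rw [show z + 2 * l + 1 = (z + l) + (l + 1) by ring, poch_add_eq_sum_antidiagonal,
    mul_sum, sum_mul, sum_div]
  refine sum_congr rfl fun ⟨i, j⟩ hij => ?_
  obtain rfl : i + j = m := HasAntidiagonal.mem_antidiagonal.1 hij
  have hpoch : poch (l + 1) j = (l + j)! / l ! := by
    rw [← factorial_mul_poch_natCast_add_one, mul_div_cancel_left₀]
    exact_mod_cast factorial_ne_zero l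
  dsimp only
  rw [Nat.cast_add_choose, Nat.cast_add_choose, hpoch, add_comm i l, poch_add z l, add_comm l j]
  have := (Nat.cast_ne_zero (R := ℂ)).2 (factorial_ne_zero (i + j))
  field_simp

lemma sum_antidiagonal_poch_two_mul_add_one_eq (x z : ℂ) (n : ℕ) :
    ∑ p ∈ antidiagonal n, poch x p.1 * poch (z + 2 * p.2 + 1) p.1 * poch z p.2 / p.1 ! =
      ∑ p ∈ antidiagonal n, poch x p.1 * poch (x + z + 2 * p.1) p.2 * poch z p.1 / p.1 ! := by
  rw [sum_antidiagonal_poch_two_mul_add_one_eq_pochTripleSum,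
    sum_antidiagonal_poch_add_eq_pochTripleSum]

lemma sum_range_succ_eq_sum_antidiagonal_fst {M : Type*} [AddCommMonoid M] (g : ℕ → M)
    (n : ℕ) :
    ∑ k ∈ range (n + 1), g k = ∑ p ∈ antidiagonal n, g p.1 :=
  (Nat.sum_antidiagonal_eq_sum_range_succ (fun i _ => g i) n).symm

lemma truncated3F2_mul_poch_eq (n : ℕ) (b x : ℂ) (hb2 : poch (-b - 2 * (n : ℂ)) n ≠ 0)
    (hb1 : poch (1 - b - (n : ℂ)) n ≠ 0) :
    (∑ k ∈ range (n + 1),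
      (poch (-b / 2 - (n : ℂ)) k * poch ((1 - b) / 2 - (n : ℂ)) k * poch x k) /
        ((k ! : ℂ) * poch (-b - 2 * (n : ℂ)) k * poch (1 - b - (n : ℂ)) k) * (4 : ℂ) ^ k) *
        poch (1 - b - (n : ℂ)) n =
      (-1) ^ n *
        ∑ p ∈ antidiagonal n, poch x p.1 * poch (b + 2 * p.2 + 1) p.1 * poch b p.2 / p.1 ! := by
  rw [sum_range_succ_eq_sum_antidiagonal_fst, sum_mul, mul_sum]
  refine sum_congr rfl fun ⟨i, j⟩ hij => ?_
  obtain rfl : i + j = n := HasAntidiagonal.mem_antidiagonal.1 hij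
  set c := -b - 2 * ((i + j : ℕ) : ℂ)
  set e := 1 - b - ((i + j : ℕ) : ℂ)
  have hc : poch c i ≠ 0 := poch_ne_zero_of_le hb2 (le_add_right le_rfl)
  have he : poch e i ≠ 0 := poch_ne_zero_of_le hb1 (le_add_right le_rfl)
  calc _ = poch (c / 2) i * poch ((c + 1) / 2) i * 4 ^ i / poch c i * poch x i *
        (poch e (i + j) / poch e i) / i ! := by
        rw [show c / 2 = -b / 2 - ((i + j : ℕ) : ℂ) by ring,
          show (c + 1) / 2 = (1 - b) / 2 - ((i + j : ℕ) : ℂ) by ring]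
        ring
    _ = poch (c + i) i * poch x i * poch (e + i) j / i ! := by
        rw [← poch_add_self hc, poch_add_div he]
    _ = _ := by
        rw [poch_eq_neg_one_pow_mul (w := b + 2 * j + 1) (by simp only [c]; push_cast; ring),
          poch_eq_neg_one_pow_mul (y := e + i) (w := b) (by simp only [e]; push_cast; ring)]
        ring

lemma poch_neg_natCast_div_factorial (i j : ℕ) :
    poch (-((i + j : ℕ) : ℂ)) i / (i + j)! = (-1) ^ i / j ! := by
  have hfac := factorial_mul_poch_natCast_add_one j i
  have hne : (j ! : ℂ) * poch (j + 1) i ≠ 0 := by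
    rw [hfac]
    exact Nat.cast_ne_zero.2 (factorial_ne_zero _)
  rw [poch_eq_neg_one_pow_mul (w := j + 1) (by push_cast; ring), add_comm i j, ← hfac,
    div_eq_div_iff hne (left_ne_zero_of_mul hne)]
  ring

lemma truncated4F3_mul_poch_eq (n : ℕ) (a b : ℂ) (ha : poch (1 + a) n ≠ 0)
    (hab : poch (1 + a - b) n ≠ 0) (hb1 : poch (1 - b - (n : ℂ)) n ≠ 0)
    (han : poch (1 + a + (n : ℂ)) n ≠ 0) :
    ((-1 : ℂ) ^ n * poch (1 + a) (2 * n) / ((n ! : ℂ) * poch (1 + a) n) *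
      ∑ k ∈ range (n + 1),
        (poch (-(n : ℂ)) k * poch ((1 + a - b) / 2) k * poch ((2 + a - b) / 2) k * poch 1 k) /
          ((k ! : ℂ) * poch (1 + a - b) k * poch (1 - b - (n : ℂ)) k *
            poch (1 + a + (n : ℂ)) k) * (4 : ℂ) ^ k) * poch (1 - b - (n : ℂ)) n =
      (-1) ^ n * ∑ p ∈ antidiagonal n, poch (-a - 2 * (n : ℂ)) p.1 *
        poch (-a - 2 * (n : ℂ) + b + 2 * p.1) p.2 * poch b p.1 / p.1 ! := by
  have hprefactor : (-1 : ℂ) ^ n * poch (1 + a) (2 * n) / ((n ! : ℂ) * poch (1 + a) n) =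
      (-1) ^ n * poch (1 + a + n) n / n ! := by
    rw [two_mul, poch_add]
    field_simp
  rw [hprefactor, mul_sum, sum_mul, sum_range_succ_eq_sum_antidiagonal_fst, mul_sum]
  conv_rhs => rw [← Nat.sum_antidiagonal_swap]
  refine sum_congr rfl fun ⟨i, j⟩ hij => ?_
  dsimp only [Prod.swap]
  obtain rfl : i + j = n := HasAntidiagonal.mem_antidiagonal.1 hij
  set d := 1 + a - b
  set e := 1 - b - ((i + j : ℕ) : ℂ)
  set f := 1 + a + ((i + j : ℕ) : ℂ)
  set x := -a - 2 * ((i + j : ℕ) : ℂ)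
  have hd : poch d i ≠ 0 := poch_ne_zero_of_le hab (le_add_right le_rfl)
  have he : poch e i ≠ 0 := poch_ne_zero_of_le hb1 (le_add_right le_rfl)
  have hf : poch f i ≠ 0 := poch_ne_zero_of_le han (le_add_right le_rfl)
  have hi : (i ! : ℂ) ≠ 0 := Nat.cast_ne_zero.2 (factorial_ne_zero i)
  have hsign : ((-1 : ℂ) ^ i) ^ 2 * ((-1 : ℂ) ^ j) ^ 2 = 1 := by simp [← pow_mul]
  calc _ = (-1) ^ (i + j) * (poch (-((i + j : ℕ) : ℂ)) i / (i + j)!) *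
        (poch (d / 2) i * poch ((d + 1) / 2) i * 4 ^ i / poch d i) *
        (poch e (i + j) / poch e i) * (poch f (i + j) / poch f i) * (poch 1 i / i !) := by
        rw [show (d + 1) / 2 = (2 + a - b) / 2 by simp only [d]; ring]
        ring
    _ = (-1) ^ (i + j) * ((-1) ^ i / j !) * poch (d + i) i * poch (e + i) j * poch (f + i) j := by
        rw [poch_neg_natCast_div_factorial, ← poch_add_self hd, poch_add_div he, poch_add_div hf,
          poch_one, div_self hi]
        ring
    _ = _ := by
        rw [poch_eq_neg_one_pow_mul (w := x + b + 2 * j) (by simp only [d, x]; push_cast; ring),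
          poch_eq_neg_one_pow_mul (y := e + i) (w := b) (by simp only [e]; push_cast; ring),
          poch_eq_neg_one_pow_mul (y := f + i) (w := x) (by simp only [f, x]; push_cast; ring)]
        linear_combination
          (-1) ^ (i + j) * (poch x j * poch (x + b + 2 * j) i * poch b j / j !) * hsign

theorem stmt_12 (n : ℕ) (a b : ℂ)
    (hb2 : poch (-b - 2 * (n : ℂ)) n ≠ 0) (hb1 : poch (1 - b - (n : ℂ)) n ≠ 0)
    (ha2 : poch (1 + a) (2 * n) ≠ 0) (hab : poch (1 + a - b) n ≠ 0)
    (han : poch (1 + a + (n : ℂ)) n ≠ 0) :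
    ∑ k ∈ range (n + 1),
      (poch (-b / 2 - (n : ℂ)) k * poch ((1 - b) / 2 - (n : ℂ)) k *
        poch (-a - 2 * (n : ℂ)) k) /
        ((Nat.factorial k : ℂ) * poch (-b - 2 * (n : ℂ)) k * poch (1 - b - (n : ℂ)) k) *
        (4 : ℂ) ^ k
    = (-1 : ℂ) ^ n * poch (1 + a) (2 * n) / ((Nat.factorial n : ℂ) * poch (1 + a) n) *
      ∑ k ∈ range (n + 1),
        (poch (-(n : ℂ)) k * poch ((1 + a - b) / 2) k * poch ((2 + a - b) / 2) k *
          poch 1 k) /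
          ((Nat.factorial k : ℂ) * poch (1 + a - b) k * poch (1 - b - (n : ℂ)) k *
            poch (1 + a + (n : ℂ)) k) * (4 : ℂ) ^ k := by
  have ha : poch (1 + a) n ≠ 0 := poch_ne_zero_of_le ha2 (by omega)
  apply mul_right_cancel₀ hb1
  rw [truncated3F2_mul_poch_eq n b _ hb2 hb1, truncated4F3_mul_poch_eq n a b ha hab hb1 han,
    sum_antidiagonal_poch_two_mul_add_one_eq]
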